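/- Let m ≥ 1 and N be odd with N ≥ 1, and let n : Fin m → ℕ with ∑_j n j = N. Suppose at least two indices j have n j odd. Then 2 · γ(D_N, n) = γ(C_N, n), where γ(C_N, n) and γ(D_N, n) are the numbers of cyclic and dihedral necklaces with multiplicities n. -/

import Mathlib

/-!
A dihedral class of colorings is the union of the cyclic classes of `f` and of its reflection
`x ↦ f (-x)`, so it suffices that these two cyclic classes always differ. If a rotation carried `f`
to its reflection, `f` would be invariant under a reflection `x ↦ c - x` of the `N`-gon. This
involution preserves every color class, so each class of odd size contains one of its fixed
points; but for odd `N` its only fixed point is `c / 2`, which cannot carry two colors.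
-/

/-- A coloring of the regular `N`-gon in `m` colors with multiplicities `n`:
a function `f : ZMod N → Fin m` whose fiber over each color `j` has cardinality `n j`. -/
def IsColoring (N m : ℕ) (n : Fin m → ℕ) (f : ZMod N → Fin m) : Prop :=
  ∀ j, Nat.card {x : ZMod N // f x = j} = n j

/-- Cyclic equivalence of colorings: one is obtained from the other by a rotation `x ↦ x + c`. -/
def cyclicSetoid (N m : ℕ) (n : Fin m → ℕ) :
    Setoid {f : ZMod N → Fin m // IsColoring N m n f} where
  r f g := ∃ c : ZMod N, ∀ x, (g : ZMod N → Fin m) x = (f : ZMod N → Fin m) (x + c)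
  iseqv := by
    refine ⟨fun f => ⟨0, fun x => by rw [add_zero]⟩, ?_, ?_⟩
    · rintro f g ⟨c, h⟩
      exact ⟨-c, fun x => by rw [h, neg_add_cancel_right]⟩
    · rintro f g k ⟨c, h1⟩ ⟨d, h2⟩
      exact ⟨d + c, fun x => by rw [h2, h1, add_assoc]⟩

/-- The number of cyclic necklaces: orbits of colorings under rotations. -/
noncomputable def gammaC (N m : ℕ) (n : Fin m → ℕ) : ℕ :=
  Nat.card (Quotient (cyclicSetoid N m n))

/-- Dihedral equivalence of colorings: one is obtained from the other by an element of
the subgroup of permutations of `ZMod N` generated by `x ↦ x + 1` and `x ↦ -x`. -/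
def dihedralSetoid (N m : ℕ) (n : Fin m → ℕ) :
    Setoid {f : ZMod N → Fin m // IsColoring N m n f} where
  r f g := ∃ σ ∈ Subgroup.closure
      ({Equiv.addRight (1 : ZMod N), Equiv.neg (ZMod N)} : Set (Equiv.Perm (ZMod N))),
      ∀ x, (g : ZMod N → Fin m) x = (f : ZMod N → Fin m) (σ x)
  iseqv := by
    refine ⟨fun f => ⟨1, one_mem _, fun x => rfl⟩, ?_, ?_⟩
    · rintro f g ⟨σ, hσ, h⟩
      exact ⟨σ⁻¹, inv_mem hσ, fun x => by rw [h, Equiv.Perm.coe_inv, Equiv.apply_symm_apply]⟩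
    · rintro f g k ⟨σ, hσ, h1⟩ ⟨τ, hτ, h2⟩
      exact ⟨σ * τ, mul_mem hσ hτ, fun x => by rw [h2, h1, Equiv.Perm.mul_apply]⟩

/-- The number of dihedral necklaces: orbits of colorings under rotations and reflections. -/
noncomputable def gammaD (N m : ℕ) (n : Fin m → ℕ) : ℕ :=
  Nat.card (Quotient (dihedralSetoid N m n))

namespace Setoid

variable {α : Type*} {r s : Setoid α} {ρ : α → α}

theorem card_quotient_eq_two_mul [Finite α] (hs : ∀ a b, s a b ↔ r a b ∨ r (ρ a) b)
    (hρ : ∀ a, ¬ r a (ρ a)) :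
    Nat.card (Quotient r) = 2 * Nat.card (Quotient s) := by
  classical
  have hle : r ≤ s := le_def.2 fun h => (hs _ _).2 (Or.inl h)
  let φ : Quotient r → Quotient s := Quotient.map id fun _ _ h => hle h
  have hfiber (a : α) : {q | φ q = ⟦a⟧} = {⟦a⟧, ⟦ρ a⟧} := by
    ext q
    induction q using Quotient.inductionOn with
    | h b =>
      simp only [Set.mem_ofPred_eq, Set.mem_insert_iff, Set.mem_singleton_iff, φ,
        Quotient.map_mk, id, Quotient.eq]
      rw [s.comm', hs, r.comm', r.comm' (x := ρ a)]
  have hcard (q : Quotient s) : Nat.card {p // φ p = q} = 2 := by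
    induction q using Quotient.inductionOn with
    | h a =>
      rw [← Set.coe_ofPred, Nat.card_coe_set_eq, hfiber, Set.ncard_pair]
      exact fun h => hρ a (Quotient.exact h)
  have := Fintype.ofFinite (Quotient s)
  calc Nat.card (Quotient r) = Nat.card (Σ q, {p // φ p = q}) :=
        Nat.card_congr (Equiv.sigmaFiberEquiv φ).symm
    _ = ∑ q : Quotient s, 2 := by rw [Nat.card_sigma]; simp only [hcard]
    _ = 2 * Nat.card (Quotient s) := by
      rw [Finset.sum_const, Finset.card_univ, Nat.card_eq_fintype_card, smul_eq_mul, mul_comm]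

end Setoid

namespace Equiv.Perm

theorem exists_fixed_point_mem_fiber_of_odd_card {α β : Type*} [Finite α] {σ : Perm α}
    (hσ : σ ^ 2 = 1) {f : α → β} (hf : ∀ x, f (σ x) = f x) {b : β}
    (hb : Odd (Nat.card {x // f x = b})) : ∃ x, f x = b ∧ σ x = x := by
  classical
  have := Fintype.ofFinite {x // f x = b}
  have hτ : σ.subtypePerm (p := fun x => f x = b) (fun x => by rw [hf]) ^ 2 ^ 1 = 1 := by
    ext x; simp [subtypePerm_pow, hσ]
  have htwo : ¬ 2 ∣ Fintype.card {x // f x = b} := by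
    rwa [← Nat.card_eq_fintype_card, ← even_iff_two_dvd, Nat.not_even_iff_odd]
  obtain ⟨⟨x, hx⟩, hfix⟩ := exists_fixed_point_of_prime (p := 2) htwo hτ
  exact ⟨x, hx, congrArg Subtype.val hfix⟩

end Equiv.Perm

theorem ZMod.eq_of_sub_eq_self {N : ℕ} (hN : Odd N) {c x y : ZMod N} (hx : c - x = x)
    (hy : c - y = y) : x = y := by
  have htwo : IsUnit (2 : ZMod N) := by
    simpa using (ZMod.isUnit_iff_coprime 2 N).2 (Nat.coprime_two_left.2 hN)
  exact htwo.mul_left_cancel (by linear_combination hy - hx)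

abbrev dihedralPermGroup (N : ℕ) : Subgroup (Equiv.Perm (ZMod N)) :=
  Subgroup.closure {Equiv.addRight (1 : ZMod N), Equiv.neg (ZMod N)}

theorem addRight_mem_dihedralPermGroup {N : ℕ} (c : ZMod N) :
    Equiv.addRight c ∈ dihedralPermGroup N := by
  have hgen : Equiv.addRight (1 : ZMod N) ∈ dihedralPermGroup N :=
    Subgroup.subset_closure (Set.mem_insert _ _)
  simpa using zpow_mem hgen (c.cast : ℤ)

theorem mem_dihedralPermGroup_iff {N : ℕ} {σ : Equiv.Perm (ZMod N)} :
    σ ∈ dihedralPermGroup N ↔ ∃ c, σ = Equiv.addRight c ∨ σ = Equiv.subLeft c := by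
  refine ⟨fun h => ?_, ?_⟩
  · induction h using Subgroup.closure_induction with
    | mem σ hσ =>
      rcases hσ with rfl | rfl
      · exact ⟨1, Or.inl rfl⟩
      · exact ⟨0, Or.inr (Equiv.ext fun x => (zero_sub x).symm)⟩
    | one => exact ⟨0, Or.inl Equiv.addRight_zero.symm⟩
    | mul σ τ _ _ ihσ ihτ =>
      obtain ⟨a, rfl | rfl⟩ := ihσ <;> obtain ⟨b, rfl | rfl⟩ := ihτ <;>
        simp only [Equiv.ext_iff, Equiv.Perm.mul_apply, Equiv.coe_addRight, Equiv.subLeft_apply]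
      · exact ⟨b + a, Or.inl fun x => by ring⟩
      · exact ⟨b + a, Or.inr fun x => by ring⟩
      · exact ⟨a - b, Or.inr fun x => by ring⟩
      · exact ⟨a - b, Or.inl fun x => by ring⟩
    | inv σ _ ih =>
      obtain ⟨c, rfl | rfl⟩ := ih
      · exact ⟨-c, Or.inl (Equiv.neg_addRight c)⟩
      · exact ⟨c, Or.inr (Equiv.ext fun x => by simp [neg_add_eq_sub])⟩
  · rintro ⟨c, rfl | rfl⟩
    · exact addRight_mem_dihedralPermGroup c
    · have hsubLeft : Equiv.subLeft c = Equiv.neg (ZMod N) * Equiv.addRight (-c) :=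
        Equiv.ext fun x => by simp [sub_eq_add_neg]
      rw [hsubLeft]
      exact mul_mem (Subgroup.subset_closure (Set.mem_insert_of_mem _ rfl))
        (addRight_mem_dihedralPermGroup (-c))

section Colorings

variable {N m : ℕ} {n : Fin m → ℕ}

theorem IsColoring.comp_perm {f : ZMod N → Fin m} (hf : IsColoring N m n f)
    (σ : Equiv.Perm (ZMod N)) : IsColoring N m n (f ∘ σ) := fun j => by
  rw [← hf j]
  exact Nat.card_congr (σ.subtypeEquiv fun _ => Iff.rfl)

def reflectColoring (f : {f : ZMod N → Fin m // IsColoring N m n f}) :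
    {f : ZMod N → Fin m // IsColoring N m n f} :=
  ⟨f.1 ∘ Equiv.neg (ZMod N), f.2.comp_perm _⟩

theorem dihedralSetoid_iff (f g : {f : ZMod N → Fin m // IsColoring N m n f}) :
    dihedralSetoid N m n f g ↔
      cyclicSetoid N m n f g ∨ cyclicSetoid N m n (reflectColoring f) g := by
  change (∃ σ ∈ dihedralPermGroup N, ∀ x, g.1 x = f.1 (σ x)) ↔
    (∃ c, ∀ x, g.1 x = f.1 (x + c)) ∨ (∃ c, ∀ x, g.1 x = f.1 (-(x + c)))
  simp only [mem_dihedralPermGroup_iff]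
  constructor
  · rintro ⟨σ, ⟨c, rfl | rfl⟩, h⟩
    · exact Or.inl ⟨c, h⟩
    · exact Or.inr ⟨-c, fun x => by rw [h]; simp [sub_eq_add_neg]⟩
  · rintro (⟨c, h⟩ | ⟨c, h⟩)
    · exact ⟨_, ⟨c, Or.inl rfl⟩, h⟩
    · exact ⟨_, ⟨-c, Or.inr rfl⟩, fun x => by rw [h]; simp [sub_eq_add_neg]⟩

theorem not_cyclicSetoid_reflectColoring (hN : Odd N)
    (hodd : 2 ≤ (Finset.univ.filter (fun j => Odd (n j))).card)
    (f : {f : ZMod N → Fin m // IsColoring N m n f}) :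
    ¬ cyclicSetoid N m n f (reflectColoring f) := by
  have : NeZero N := ⟨hN.pos.ne'⟩
  rintro ⟨c, hc⟩
  have hsymm (x : ZMod N) : f.1 (Equiv.subLeft c x) = f.1 x := by
    simpa [reflectColoring, neg_add_eq_sub] using (hc (-x)).symm
  have hinv : Equiv.subLeft c ^ 2 = 1 := Equiv.ext fun x => by simp [sq]
  have hfixed (j : Fin m) (hj : Odd (n j)) : ∃ x, f.1 x = j ∧ c - x = x :=
    Equiv.Perm.exists_fixed_point_mem_fiber_of_odd_card hinv hsymm (by rwa [f.2 j])
  obtain ⟨j₁, hj₁, j₂, hj₂, hne⟩ := Finset.one_lt_card.1 hodd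
  rw [Finset.mem_filter] at hj₁ hj₂
  obtain ⟨x₁, rfl, hx₁⟩ := hfixed j₁ hj₁.2
  obtain ⟨x₂, rfl, hx₂⟩ := hfixed j₂ hj₂.2
  exact hne (congrArg f.1 (ZMod.eq_of_sub_eq_self hN hx₁ hx₂))

end Colorings

theorem dihedral_necklace_odd_many_odd_colors_general (m N : ℕ) (hNodd : Odd N) (n : Fin m → ℕ)
    (hodd : 2 ≤ (Finset.univ.filter (fun j => Odd (n j))).card) :
    2 * gammaD N m n = gammaC N m n := by
  have : NeZero N := ⟨hNodd.pos.ne'⟩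
  exact (Setoid.card_quotient_eq_two_mul dihedralSetoid_iff
    (not_cyclicSetoid_reflectColoring hNodd hodd)).symm

/-- Dihedral necklaces for odd `N` with at least two odd multiplicities:
`2 γ(D_N, n) = γ(C_N, n)`. -/
theorem dihedral_necklace_odd_many_odd_colors (m N : ℕ) (hm : 1 ≤ m) (hN : 1 ≤ N)
    (hNodd : Odd N) (n : Fin m → ℕ) (hsum : ∑ j, n j = N)
    (hodd : 2 ≤ (Finset.univ.filter (fun j => Odd (n j))).card) :
    2 * gammaD N m n = gammaC N m n :=
  dihedral_necklace_odd_many_odd_colors_general m N hNodd n hodd
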